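/- With notation as in the previous context, for a point R on the twisted Edwards curve E_{a,d}, the rational functions (φ_{R,R}/(ℓ_{2,2R}·ℓ_{1,O}))² · φ_{2R,2R}/(ℓ_{2,4R}·ℓ_{1,O}) and φ_{R,R}² / (φ_{-2R,-2R} · φ_{O,O}) have equal divisors. -/

import Mathlib

open Finsupp

/-- Affine points of the twisted Edwards curve `a*x^2 + y^2 = 1 + d*x^2*y^2`. -/
def EdwardsPoint (F : Type*) [Field F] (a d : F) : Type _ :=
  {P : F × F // a * P.1 ^ 2 + P.2 ^ 2 = 1 + d * P.1 ^ 2 * P.2 ^ 2}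

theorem divisor_identity_XuLin_1_general (p : ℕ) [Fact p.Prime] (a d : ZMod p)
    [AddCommGroup (EdwardsPoint (ZMod p) a d)]
    {X : Type*} (ι : EdwardsPoint (ZMod p) a d → X)
    (ω' : EdwardsPoint (ZMod p) a d)
    (Ω₁ Ω₂ : X)
    (divφ : EdwardsPoint (ZMod p) a d → EdwardsPoint (ZMod p) a d → (X →₀ ℤ))
    (hφ : ∀ S T, divφ S T =
      Finsupp.single (ι S) 1 + Finsupp.single (ι T) 1 + Finsupp.single (ι (-(S + T))) 1
        + Finsupp.single (ι ω') 1
        - (2 : ℤ) • Finsupp.single Ω₁ 1 - (2 : ℤ) • Finsupp.single Ω₂ 1)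
    (divℓ₂ : EdwardsPoint (ZMod p) a d → (X →₀ ℤ))
    (hℓ₂ : ∀ S, divℓ₂ S =
      Finsupp.single (ι S) 1 + Finsupp.single (ι (-S)) 1 - (2 : ℤ) • Finsupp.single Ω₁ 1)
    (divℓ₁O : X →₀ ℤ)
    (hℓ₁O : divℓ₁O =
      Finsupp.single (ι 0) 1 + Finsupp.single (ι ω') 1 - (2 : ℤ) • Finsupp.single Ω₂ 1)
    (R : EdwardsPoint (ZMod p) a d) :
    (2 : ℤ) • (divφ R R - divℓ₂ (2 • R) - divℓ₁O)
        + (divφ (2 • R) (2 • R) - divℓ₂ (4 • R) - divℓ₁O)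
      = (2 : ℤ) • divφ R R - divφ (-(2 • R)) (-(2 • R)) - divφ 0 0 := by
  -- Both sides expand to 4(R) - (4R) - 3(O); the group law enters only through 2R + 2R = 4R.
  have two_R : R + R = 2 • R := (two_smul ℕ R).symm
  have four_R : 2 • R + 2 • R = 4 • R := by rw [← add_smul]
  have neg_four_R : -(-(2 • R) + -(2 • R)) = (4 • R : EdwardsPoint (ZMod p) a d) := by
    rw [← neg_add, neg_neg, four_R]
  simp only [hφ, hℓ₂, hℓ₁O, two_R, four_R, neg_four_R, add_zero, neg_zero]
  abel

/-- Theorem 1(1) of Xu–Lin. The rational functions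
`(φ_{R,R}/(ℓ_{2,2R}·ℓ_{1,O}))² · φ_{2R,2R}/(ℓ_{2,4R}·ℓ_{1,O})` and
`φ_{R,R}² / (φ_{-2R,-2R} · φ_{O,O})` have equal divisors.
Here each conic `φ_{S,T}` has divisor `(S) + (T) + (-(S+T)) + (O') - 2(Ω₁) - 2(Ω₂)`;
the line `ℓ_{2,S}` through `S` has divisor `(S) + (-S) - 2(Ω₁)` (so, e.g.,
`div(ℓ_{2,2R}) = (2R) + (-2R) - 2(Ω₁)`), and the line `ℓ_{1,O}` through the neutral
point `O` has divisor `(O) + (O') - 2(Ω₂)`, as in Arène et al. Theorem 2. -/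
theorem divisor_identity_XuLin_1 (p : ℕ) [Fact p.Prime] (hp : p ≠ 2) (a d : ZMod p)
    (ha : a ≠ 0) (hd : d ≠ 0) (had : a ≠ d)
    [AddCommGroup (EdwardsPoint (ZMod p) a d)]
    (hO : (Subtype.val (0 : EdwardsPoint (ZMod p) a d) : ZMod p × ZMod p) = (0, 1))
    {X : Type*} (ι : EdwardsPoint (ZMod p) a d → X) (hι : Function.Injective ι)
    (ω' : EdwardsPoint (ZMod p) a d) (hω' : (Subtype.val ω' : ZMod p × ZMod p) = (0, -1))
    (Ω₁ Ω₂ : X) (hΩ₁ : Ω₁ ∉ Set.range ι) (hΩ₂ : Ω₂ ∉ Set.range ι) (hΩ : Ω₁ ≠ Ω₂)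
    (divφ : EdwardsPoint (ZMod p) a d → EdwardsPoint (ZMod p) a d → (X →₀ ℤ))
    (hφ : ∀ S T, divφ S T =
      Finsupp.single (ι S) 1 + Finsupp.single (ι T) 1 + Finsupp.single (ι (-(S + T))) 1
        + Finsupp.single (ι ω') 1
        - (2 : ℤ) • Finsupp.single Ω₁ 1 - (2 : ℤ) • Finsupp.single Ω₂ 1)
    (divℓ₂ : EdwardsPoint (ZMod p) a d → (X →₀ ℤ))
    (hℓ₂ : ∀ S, divℓ₂ S =
      Finsupp.single (ι S) 1 + Finsupp.single (ι (-S)) 1 - (2 : ℤ) • Finsupp.single Ω₁ 1)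
    (divℓ₁O : X →₀ ℤ)
    (hℓ₁O : divℓ₁O =
      Finsupp.single (ι 0) 1 + Finsupp.single (ι ω') 1 - (2 : ℤ) • Finsupp.single Ω₂ 1)
    (R : EdwardsPoint (ZMod p) a d) :
    (2 : ℤ) • (divφ R R - divℓ₂ (2 • R) - divℓ₁O)
        + (divφ (2 • R) (2 • R) - divℓ₂ (4 • R) - divℓ₁O)
      = (2 : ℤ) • divφ R R - divφ (-(2 • R)) (-(2 • R)) - divφ 0 0 :=
  divisor_identity_XuLin_1_general p a d ι ω' Ω₁ Ω₂ divφ hφ divℓ₂ hℓ₂ divℓ₁O hℓ₁O R
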